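/- Let e: [0,∞) → ℝ be a C^1 function, nonnegative and nondecreasing, satisfying the differential inequality e'(r) ≥ c(e(r) + C_1)² - 2C_0 for all r > r̄, with constants c > 0, C_0, C_1 > 0 and e(r̄) > 0. Then it is impossible that e(r) → +∞ as r → +∞ (otherwise e would blow up in finite time and could not be finite on all of [0,∞)); consequently e must be bounded. -/

import Mathlib

open Real Set Filter

/-- an everywhere-defined nonnegative nondecreasing `C¹` function
`e` on `[0,∞)` satisfying `e'(r) ≥ c (e r + C₁)² - 2C₀` for `r > r̄` (with
`c > 0`, `C₀, C₁ > 0`, `e(r̄) > 0`) and tending to `+∞` cannot exist: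
such a Riccati-type inequality forces blow-up in finite time. -/
theorem stmt_11 (c C₀ C₁ rbar : ℝ) (hc : 0 < c) (hC₀ : 0 < C₀) (hC₁ : 0 < C₁)
    (e e' : ℝ → ℝ)
    (hderiv : ∀ r, 0 ≤ r → HasDerivAt e (e' r) r)
    (hpos : ∀ r, 0 ≤ r → 0 ≤ e r)
    (hmono : MonotoneOn e (Set.Ici 0))
    (hrbar : 0 ≤ rbar) (hebar : 0 < e rbar)
    (hineq : ∀ r, rbar < r → c * (e r + C₁) ^ 2 - 2 * C₀ ≤ e' r)
    (hinf : Tendsto e atTop atTop) : False := by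
  -- pick R beyond which e is large
  obtain ⟨R₀, hR₀⟩ := Filter.eventually_atTop.mp
    (hinf.eventually_ge_atTop (Real.sqrt (4 * C₀ / c)))
  set K := Real.sqrt (4 * C₀ / c) with hK
  set R : ℝ := max (rbar + 1) R₀ with hRdef
  have hRnn : 0 ≤ R := le_trans (by linarith) (le_max_left _ _)
  have hRrbar : rbar < R := lt_of_lt_of_le (by linarith) (le_max_left _ _)
  -- positivity of e r + C₁ for r ≥ 0
  have hposC : ∀ r, 0 ≤ r → 0 < e r + C₁ := fun r hr => by
    have := hpos r hr; linarith
  -- auxiliary function g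
  set g : ℝ → ℝ := fun r => -(e r + C₁)⁻¹ - c / 2 * r with hg
  have hgd : ∀ r, 0 ≤ r →
      HasDerivAt g (e' r / (e r + C₁) ^ 2 - c / 2) r := by
    intro r hr
    have h1 : HasDerivAt (fun r => e r + C₁) (e' r) r := (hderiv r hr).add_const C₁
    have hne : e r + C₁ ≠ 0 := (hposC r hr).ne'
    have h2 := (h1.inv hne).neg
    have h3 : HasDerivAt (fun r : ℝ => c / 2 * r) (c / 2) r := by
      simpa using (hasDerivAt_id r).const_mul (c / 2)
    have h4 := h2.sub h3
    exact h4.congr_deriv (by ring)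
  -- derivative of g is nonneg on interior (Ici R)
  have hKsq : K ^ 2 = 4 * C₀ / c := Real.sq_sqrt (by positivity)
  have hgmono : MonotoneOn g (Set.Ici R) := by
    apply monotoneOn_of_deriv_nonneg (convex_Ici R)
    · intro x hx
      exact ((hgd x (le_trans hRnn hx)).continuousAt).continuousWithinAt
    · intro x hx
      rw [interior_Ici] at hx
      exact ((hgd x (le_trans hRnn hx.le)).differentiableAt).differentiableWithinAt
    · intro x hx
      rw [interior_Ici] at hx
      have hx0 : 0 ≤ x := le_trans hRnn (le_of_lt hx)
      rw [(hgd x hx0).deriv]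
      have hxrbar : rbar < x := lt_trans hRrbar hx
      have hKe : K ≤ e x := hR₀ x (le_trans (le_max_right _ _) (le_of_lt hx))
      have hX : 0 < e x + C₁ := hposC x hx0
      have hK0 : 0 ≤ K := Real.sqrt_nonneg _
      have hsq : K ^ 2 ≤ (e x + C₁) ^ 2 := by nlinarith
      have h5 : c / 2 * (e x + C₁) ^ 2 ≤ e' x := by
        have := hineq x hxrbar
        have : 4 * C₀ / c ≤ (e x + C₁) ^ 2 := hKsq ▸ hsq
        have h6 : 2 * C₀ ≤ c / 2 * (e x + C₁) ^ 2 := by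
          rw [div_le_iff₀ hc] at this; nlinarith
        nlinarith [hineq x hxrbar]
      rw [sub_nonneg, div_le_div_iff₀ (by norm_num : (0:ℝ) < 2) (by positivity)]
      nlinarith
  -- evaluate monotonicity at a far point
  set r₁ : ℝ := R + 2 * (e R + C₁)⁻¹ / c + 1 with hr₁
  have hinvpos : 0 < (e R + C₁)⁻¹ := inv_pos.mpr (hposC R hRnn)
  have hr₁R : R ≤ r₁ := by
    have h : 0 < 2 * (e R + C₁)⁻¹ / c + 1 := by positivity
    rw [hr₁]; linarith
  have hle := hgmono (Set.self_mem_Ici) (Set.mem_Ici.mpr hr₁R) hr₁R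
  have hinvpos1 : 0 < (e r₁ + C₁)⁻¹ := inv_pos.mpr (hposC r₁ (le_trans hRnn hr₁R))
  simp only [hg] at hle
  have hneR : e R + C₁ ≠ 0 := (hposC R hRnn).ne'
  have hcr : c / 2 * r₁ = c / 2 * R + (e R + C₁)⁻¹ + c / 2 := by
    rw [hr₁]; field_simp [hc.ne', hneR]
  nlinarith
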